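/- Let R > 0, γ > 0, and let K : ℝ² → ℝ be C³ with K(0) = 0, ∂₁K(0) = 0, and ∂₂K(0) = 2R (so that |K(x) − 2Rx₂| ≤ C₀|x|² near 0). Then there exist d ∈ ℝ and a homogeneous polynomial P₄ of degree 4 in (x₁,x₂) such that the function ĥ(x₁,x₂) := (γ²/2)x₁² + γ x₁ x₂ + (1/2)x₂² + d x₂³ + P₄(x₁,x₂) satisfies: there are constants C > 0 and r > 0 with |det Hess ĥ(x) − (K(x)/2)(1 + 2∂₁ĥ(x) + |∇ĥ(x)|²)| ≤ C(x₁² + x₂²)^{3/2} for all |x| ≤ r. Moreover one may take d = R/(6γ²). -/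

import Mathlib

/-!
Let `E = det Hess ĥ - (K/2)(1 + 2∂₁ĥ + |∇ĥ|²)`. Since `K` is `C³`, Taylor's formula gives
`K = T₂K + O(|x|³)`, and the derivatives of `ĥ` are polynomials, so `E` is `O(|x|³)` as soon as
its `2`-jet, computed in the algebra of polynomials modulo terms of degree `≥ 3`, vanishes. The
constant term vanishes because the quadratic part of `ĥ` has degenerate Hessian and `K(0) = 0`,
the `x₁` coefficient because `∂₁K(0) = 0`, and the `x₂` coefficient is `6γ²d - R`. The
coefficients of `x₁²`, `x₁x₂`, `x₂²` are affine in the coefficients `c₀`, `c₃`, `c₄` of `x₁⁴`,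
`x₁x₂³`, `x₂⁴` in `P₄`, with invertible triangular linear part, which determines `c₀`, `c₃`, `c₄`.
-/

/-- First partial derivative of a function on `ℝ × ℝ`. -/
noncomputable def pd1 (f : ℝ × ℝ → ℝ) (x : ℝ × ℝ) : ℝ := fderiv ℝ f x (1, 0)

/-- Second partial derivative of a function on `ℝ × ℝ`. -/
noncomputable def pd2 (f : ℝ × ℝ → ℝ) (x : ℝ × ℝ) : ℝ := fderiv ℝ f x (0, 1)

/-- Determinant of the Hessian: `∂₁₁f·∂₂₂f − (∂₁₂f)²`. -/
noncomputable def detHess (f : ℝ × ℝ → ℝ) (x : ℝ × ℝ) : ℝ :=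
  pd1 (pd1 f) x * pd2 (pd2 f) x - (pd1 (pd2 f) x) ^ 2

open Asymptotics Filter Topology Metric

section Taylor

variable {E F : Type*} [NormedAddCommGroup E] [NormedSpace ℝ E]
  [NormedAddCommGroup F] [NormedSpace ℝ F]

theorem isBigO_norm_sub_pow_succ_of_fderiv {g : E → F} {a : E} {n : ℕ}
    (hd : ∀ᶠ y in 𝓝 a, DifferentiableAt ℝ g y) (ha : g a = 0)
    (h : fderiv ℝ g =O[𝓝 a] fun y => ‖y - a‖ ^ n) :
    g =O[𝓝 a] fun y => ‖y - a‖ ^ (n + 1) := by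
  obtain ⟨C, hC, hCg⟩ := h.exists_nonneg
  obtain ⟨r, hr, hball⟩ := Metric.eventually_nhds_iff_ball.1 (hd.and hCg.bound)
  refine IsBigO.of_bound C (eventually_of_mem (ball_mem_nhds a hr) fun x hx => ?_)
  have hsub : closedBall a ‖x - a‖ ⊆ ball a r :=
    closedBall_subset_ball (by simpa [dist_eq_norm] using hx)
  have hmvt := (convex_closedBall a ‖x - a‖).norm_image_sub_le_of_norm_fderiv_le
    (C := C * ‖x - a‖ ^ n) (fun z hz => (hball z (hsub hz)).1) (fun z hz => ?_)
    (mem_closedBall_self (norm_nonneg _)) (by simp [dist_eq_norm] : x ∈ closedBall a ‖x - a‖)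
  · rw [ha, sub_zero] at hmvt
    simpa [pow_succ, mul_assoc] using hmvt
  · have hz' : ‖z - a‖ ≤ ‖x - a‖ := by simpa [dist_eq_norm] using hz
    calc ‖fderiv ℝ g z‖ ≤ C * ‖‖z - a‖ ^ n‖ := (hball z (hsub hz)).2
      _ ≤ C * ‖x - a‖ ^ n := by
        rw [norm_pow, norm_norm]; gcongr

theorem ContDiffAt.isBigO_sub_taylor_two {f : E → F} {a : E} (hf : ContDiffAt ℝ 3 f a) :
    (fun x => f x - f a - fderiv ℝ f a (x - a)
        - (1 / 2 : ℝ) • fderiv ℝ (fderiv ℝ f) a (x - a) (x - a))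
      =O[𝓝 a] fun x => ‖x - a‖ ^ 3 := by
  set B := fderiv ℝ (fderiv ℝ f) a
  have hnear : ∀ᶠ y in 𝓝 a, ContDiffAt ℝ 3 f y := hf.eventually (by simp)
  have hd0 : ∀ᶠ y in 𝓝 a, DifferentiableAt ℝ f y :=
    hnear.mono fun y hy => hy.differentiableAt (by norm_num)
  have hd1 : ∀ᶠ y in 𝓝 a, DifferentiableAt ℝ (fderiv ℝ f) y :=
    hnear.mono fun y hy => (hy.fderiv_right (m := 2) (by norm_num)).differentiableAt (by norm_num)
  have hd2 : ∀ᶠ y in 𝓝 a, DifferentiableAt ℝ (fderiv ℝ (fderiv ℝ f)) y :=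
    hnear.mono fun y hy => ((hy.fderiv_right (m := 2) (by norm_num)).fderiv_right (m := 1)
      (by norm_num)).differentiableAt (by norm_num)
  have hc3 : ContinuousAt (fderiv ℝ (fderiv ℝ (fderiv ℝ f))) a :=
    (((hf.fderiv_right (m := 2) (by norm_num)).fderiv_right (m := 1) (by norm_num)).fderiv_right
      (m := 0) (by norm_num)).continuousAt
  have h2 : (fun y => fderiv ℝ (fderiv ℝ f) y - B) =O[𝓝 a] fun y => ‖y - a‖ ^ (0 + 1) := by
    refine isBigO_norm_sub_pow_succ_of_fderiv (hd2.mono fun y hy => hy.sub_const B) (sub_self B) ?_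
    simpa [fderiv_sub_const] using hc3.tendsto.isBigO_one ℝ
  have h1 : (fun y => fderiv ℝ f y - fderiv ℝ f a - B (y - a))
      =O[𝓝 a] fun y => ‖y - a‖ ^ (1 + 1) := by
    refine isBigO_norm_sub_pow_succ_of_fderiv (hd1.mono fun y hy => by fun_prop) (by simp) ?_
    refine h2.congr' ?_ EventuallyEq.rfl
    filter_upwards [hd1] with y hy
    exact (((hy.hasFDerivAt.sub_const _).sub (B.hasFDerivAt.comp y
      ((hasFDerivAt_id y).sub_const a))).congr_fderiv (by simp)).fderiv.symm
  refine isBigO_norm_sub_pow_succ_of_fderiv (hd0.mono fun y hy => by fun_prop) (by simp) ?_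
  refine h1.congr' ?_ EventuallyEq.rfl
  -- by symmetry of `B`, the derivative of `y ↦ ½ B (y - a) (y - a)` is `B (y - a)`
  have hsym : ∀ v w, B v w = B w v := hf.isSymmSndFDerivAt (by simp; norm_num)
  filter_upwards [hd0] with y hy
  have hxa := (hasFDerivAt_id (𝕜 := ℝ) y).sub_const a
  refine ((((hy.hasFDerivAt.sub_const _).sub ((fderiv ℝ f a).hasFDerivAt.comp y hxa)).sub
    ((B.hasFDerivAt_of_bilinear hxa hxa).const_smul (1 / 2 : ℝ))).congr_fderiv ?_).fderiv.symm
  ext v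
  simp [hsym v]
  module

theorem fderiv_fderiv_apply {f : E → F} {x : E}
    (hf : DifferentiableAt ℝ (fderiv ℝ f) x) (v w : E) :
    fderiv ℝ (fun y => fderiv ℝ f y w) x v = fderiv ℝ (fderiv ℝ f) x v w := by
  rw [fderiv_clm_apply hf (differentiableAt_const w)]
  simp

theorem ContinuousLinearMap.apply_eq_fst_smul_add_snd_smul (L : ℝ × ℝ →L[ℝ] F) (x : ℝ × ℝ) :
    L x = x.1 • L (1, 0) + x.2 • L (0, 1) := by
  rw [← map_smul, ← map_smul, ← map_add]
  congr 1
  ext <;> simp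

end Taylor

theorem isBigO_fst_pow_mul_snd_pow (l : Filter (ℝ × ℝ)) (i j : ℕ) :
    (fun x : ℝ × ℝ => x.1 ^ i * x.2 ^ j) =O[l] fun x => ‖x‖ ^ (i + j) := by
  refine IsBigO.of_bound 1 (Eventually.of_forall fun x => ?_)
  simp only [one_mul, norm_mul, norm_pow, norm_norm, pow_add]
  gcongr
  exacts [norm_fst_le x, norm_snd_le x]

/-- `cij` is the coefficient of `x₁^i x₂^j`; with the truncated product below, `Jet2` is the algebra
of polynomials on `ℝ × ℝ` modulo terms of degree `≥ 3`. -/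
@[ext]
structure Jet2 where
  c00 : ℝ
  c10 : ℝ
  c01 : ℝ
  c20 : ℝ
  c11 : ℝ
  c02 : ℝ

namespace Jet2

def lin (J : Jet2) (x : ℝ × ℝ) : ℝ := J.c10 * x.1 + J.c01 * x.2

def quad (J : Jet2) (x : ℝ × ℝ) : ℝ := J.c20 * x.1 ^ 2 + J.c11 * x.1 * x.2 + J.c02 * x.2 ^ 2

def eval (J : Jet2) (x : ℝ × ℝ) : ℝ := J.c00 + J.lin x + J.quad x

@[simps]
def const (c : ℝ) : Jet2 := ⟨c, 0, 0, 0, 0, 0⟩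

@[simps]
instance : Add Jet2 :=
  ⟨fun J K => ⟨J.c00 + K.c00, J.c10 + K.c10, J.c01 + K.c01, J.c20 + K.c20, J.c11 + K.c11,
    J.c02 + K.c02⟩⟩

@[simps]
instance : Sub Jet2 :=
  ⟨fun J K => ⟨J.c00 - K.c00, J.c10 - K.c10, J.c01 - K.c01, J.c20 - K.c20, J.c11 - K.c11,
    J.c02 - K.c02⟩⟩

@[simps]
instance : Mul Jet2 :=
  ⟨fun J K => ⟨J.c00 * K.c00, J.c00 * K.c10 + J.c10 * K.c00, J.c00 * K.c01 + J.c01 * K.c00,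
    J.c00 * K.c20 + J.c10 * K.c10 + J.c20 * K.c00,
    J.c00 * K.c11 + J.c10 * K.c01 + J.c01 * K.c10 + J.c11 * K.c00,
    J.c00 * K.c02 + J.c01 * K.c01 + J.c02 * K.c00⟩⟩

@[simps]
instance : Zero Jet2 := ⟨⟨0, 0, 0, 0, 0, 0⟩⟩

@[simp]
theorem eval_zero (x : ℝ × ℝ) : (0 : Jet2).eval x = 0 := by
  simp [eval, lin, quad]

theorem isBigO_lin (J : Jet2) (l : Filter (ℝ × ℝ)) : J.lin =O[l] fun x => ‖x‖ ^ 1 :=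
  ((isBigO_fst_pow_mul_snd_pow l 1 0).const_mul_left J.c10).add
    ((isBigO_fst_pow_mul_snd_pow l 0 1).const_mul_left J.c01) |>.congr_left fun x => by
      simp [lin]

theorem isBigO_quad (J : Jet2) (l : Filter (ℝ × ℝ)) : J.quad =O[l] fun x => ‖x‖ ^ 2 :=
  (((isBigO_fst_pow_mul_snd_pow l 2 0).const_mul_left J.c20).add
    ((isBigO_fst_pow_mul_snd_pow l 1 1).const_mul_left J.c11)).add
    ((isBigO_fst_pow_mul_snd_pow l 0 2).const_mul_left J.c02) |>.congr_left fun x => by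
      simp [quad, mul_assoc]

theorem continuous_eval (J : Jet2) : Continuous J.eval := by
  unfold eval lin quad; fun_prop

theorem eval_mul (J K : Jet2) (x : ℝ × ℝ) :
    J.eval x * K.eval x
      = (J * K).eval x + (J.lin x * K.quad x + J.quad x * K.lin x + J.quad x * K.quad x) := by
  simp only [eval, lin, quad, mul_c00, mul_c10, mul_c01, mul_c20, mul_c11, mul_c02]
  ring

end Jet2

def IsJet2 (f : ℝ × ℝ → ℝ) (J : Jet2) : Prop :=
  (fun x => f x - J.eval x) =O[𝓝 0] fun x => ‖x‖ ^ 3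

theorem isJet2_of_eq_add {f r : ℝ × ℝ → ℝ} {J : Jet2} (h : ∀ x, f x = J.eval x + r x)
    (hr : r =O[𝓝 0] fun x => ‖x‖ ^ 3) : IsJet2 f J :=
  hr.congr_left fun x => by rw [h]; ring

theorem isJet2_of_eq_eval {f : ℝ × ℝ → ℝ} {J : Jet2} (h : ∀ x, f x = J.eval x) : IsJet2 f J :=
  isJet2_of_eq_add (r := 0) (fun x => by simp [h]) (isBigO_zero _ _)

theorem isJet2_const (c : ℝ) : IsJet2 (fun _ => c) (Jet2.const c) :=
  isJet2_of_eq_eval fun x => by simp [Jet2.eval, Jet2.lin, Jet2.quad]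

namespace IsJet2

variable {f g : ℝ × ℝ → ℝ} {J K : Jet2}

theorem congr (hf : IsJet2 f J) (h : ∀ x, f x = g x) : IsJet2 g J :=
  funext h ▸ hf

theorem isBigO_one (hf : IsJet2 f J) : f =O[𝓝 0] fun _ => (1 : ℝ) := by
  have hcube : (fun x : ℝ × ℝ => ‖x‖ ^ 3) =O[𝓝 0] fun _ => (1 : ℝ) :=
    (continuous_norm.pow 3).continuousAt.tendsto.isBigO_one ℝ
  exact ((hf.trans hcube).add ((J.continuous_eval.tendsto 0).isBigO_one ℝ)).congr_left
    fun x => by ring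

theorem add (hf : IsJet2 f J) (hg : IsJet2 g K) : IsJet2 (fun x => f x + g x) (J + K) :=
  (IsBigO.add hf hg).congr_left fun x => by
    simp only [Jet2.eval, Jet2.lin, Jet2.quad, Jet2.add_c00, Jet2.add_c10, Jet2.add_c01,
      Jet2.add_c20, Jet2.add_c11, Jet2.add_c02]
    ring

theorem sub (hf : IsJet2 f J) (hg : IsJet2 g K) : IsJet2 (fun x => f x - g x) (J - K) :=
  (IsBigO.sub hf hg).congr_left fun x => by
    simp only [Jet2.eval, Jet2.lin, Jet2.quad, Jet2.sub_c00, Jet2.sub_c10, Jet2.sub_c01,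
      Jet2.sub_c20, Jet2.sub_c11, Jet2.sub_c02]
    ring

theorem mul (hf : IsJet2 f J) (hg : IsJet2 g K) : IsJet2 (fun x => f x * g x) (J * K) := by
  have hJ : J.eval =O[𝓝 0] fun _ => (1 : ℝ) := (J.continuous_eval.tendsto 0).isBigO_one ℝ
  have h34 : (fun x => J.lin x * K.quad x + J.quad x * K.lin x + J.quad x * K.quad x)
      =O[𝓝 0] fun x => ‖x‖ ^ 3 := by
    have h4 : (fun x : ℝ × ℝ => ‖x‖ ^ 4) =O[𝓝 0] fun x => ‖x‖ ^ 3 :=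
      (isLittleO_norm_pow_norm_pow (by norm_num)).isBigO
    refine ((((J.isBigO_lin _).mul (K.isBigO_quad _)).congr_right fun x => by ring).add
      (((J.isBigO_quad _).mul (K.isBigO_lin _)).congr_right fun x => by ring)).add ?_
    exact ((J.isBigO_quad _).mul (K.isBigO_quad _)).congr_right (fun x => by ring) |>.trans h4
  have hfg : (fun x => (f x - J.eval x) * g x) =O[𝓝 0] fun x => ‖x‖ ^ 3 :=
    (IsBigO.mul hf hg.isBigO_one).congr_right fun x => mul_one _
  have hJg : (fun x => J.eval x * (g x - K.eval x)) =O[𝓝 0] fun x => ‖x‖ ^ 3 :=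
    (hJ.mul hg).congr_right fun x => one_mul _
  exact ((hfg.add hJg).add h34).congr_left fun x => by linear_combination -J.eval_mul K x

theorem exists_abs_le_rpow (hf : IsJet2 f 0) :
    ∃ C > (0 : ℝ), ∃ r > (0 : ℝ), ∀ x : ℝ × ℝ, Real.sqrt (x.1 ^ 2 + x.2 ^ 2) ≤ r →
      |f x| ≤ C * (x.1 ^ 2 + x.2 ^ 2) ^ ((3 : ℝ) / 2) := by
  obtain ⟨C, hC, hCf⟩ := hf.exists_pos
  obtain ⟨ε, hε, hball⟩ := Metric.eventually_nhds_iff_ball.1 hCf.bound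
  refine ⟨C, hC, ε / 2, by positivity, fun x hx => ?_⟩
  have hnorm : ‖x‖ ≤ Real.sqrt (x.1 ^ 2 + x.2 ^ 2) :=
    max_le (Real.abs_le_sqrt (by nlinarith)) (Real.abs_le_sqrt (by nlinarith))
  have hfx := hball x (mem_ball_zero_iff.2 (by linarith))
  rw [Jet2.eval_zero, sub_zero, norm_pow, norm_norm, Real.norm_eq_abs] at hfx
  calc |f x| ≤ C * ‖x‖ ^ 3 := hfx
    _ ≤ C * Real.sqrt (x.1 ^ 2 + x.2 ^ 2) ^ 3 := by gcongr
    _ = C * (x.1 ^ 2 + x.2 ^ 2) ^ ((3 : ℝ) / 2) := by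
      rw [Real.sqrt_eq_rpow, ← Real.rpow_natCast, ← Real.rpow_mul (by positivity)]
      norm_num

end IsJet2

noncomputable def taylorJet2 (f : ℝ × ℝ → ℝ) : Jet2 :=
  ⟨f 0, pd1 f 0, pd2 f 0, pd1 (pd1 f) 0 / 2, (pd1 (pd2 f) 0 + pd2 (pd1 f) 0) / 2,
    pd2 (pd2 f) 0 / 2⟩

theorem ContDiffAt.isJet2_taylorJet2 {f : ℝ × ℝ → ℝ} (hf : ContDiffAt ℝ 3 f 0) :
    IsJet2 f (taylorJet2 f) := by
  set B := fderiv ℝ (fderiv ℝ f) 0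
  have hB := (hf.fderiv_right (m := 2) (by norm_num)).differentiableAt (by norm_num)
  have h11 : pd1 (pd1 f) 0 = B (1, 0) (1, 0) := fderiv_fderiv_apply hB _ _
  have h12 : pd1 (pd2 f) 0 = B (1, 0) (0, 1) := fderiv_fderiv_apply hB _ _
  have h21 : pd2 (pd1 f) 0 = B (0, 1) (1, 0) := fderiv_fderiv_apply hB _ _
  have h22 : pd2 (pd2 f) 0 = B (0, 1) (0, 1) := fderiv_fderiv_apply hB _ _
  refine hf.isBigO_sub_taylor_two.congr (fun x => ?_) (fun x => by simp)
  rw [sub_zero, B.apply_eq_fst_smul_add_snd_smul x, (fderiv ℝ f 0).apply_eq_fst_smul_add_snd_smul x]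
  simp only [add_apply, smul_apply]
  rw [(B (1, 0)).apply_eq_fst_smul_add_snd_smul x, (B (0, 1)).apply_eq_fst_smul_add_snd_smul x]
  simp only [taylorJet2, Jet2.eval, Jet2.lin, Jet2.quad, h11, h12, h21, h22, smul_eq_mul]
  simp only [pd1, pd2]
  ring

noncomputable def mongeAmpereDefect (K f : ℝ × ℝ → ℝ) (x : ℝ × ℝ) : ℝ :=
  detHess f x - K x / 2 * (1 + 2 * pd1 f x + (pd1 f x ^ 2 + pd2 f x ^ 2))

theorem IsJet2.mongeAmpereDefect {K f : ℝ × ℝ → ℝ} {JK J1 J2 J11 J12 J22 : Jet2}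
    (hK : IsJet2 K JK) (h1 : IsJet2 (pd1 f) J1) (h2 : IsJet2 (pd2 f) J2)
    (h11 : IsJet2 (pd1 (pd1 f)) J11) (h12 : IsJet2 (pd1 (pd2 f)) J12)
    (h22 : IsJet2 (pd2 (pd2 f)) J22) :
    IsJet2 (mongeAmpereDefect K f) (J11 * J22 - J12 * J12 - JK * Jet2.const (1 / 2)
      * (Jet2.const 1 + Jet2.const 2 * J1 + (J1 * J1 + J2 * J2))) :=
  (((h11.mul h22).sub (h12.mul h12)).sub ((hK.mul (isJet2_const _)).mul
    (((isJet2_const _).add ((isJet2_const _).mul h1)).add ((h1.mul h1).add (h2.mul h2))))).congr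
    fun x => by simp only [_root_.mongeAmpereDefect, detHess]; ring

noncomputable def hHat (γ d c0 c3 c4 : ℝ) : ℝ × ℝ → ℝ := fun y =>
  γ ^ 2 / 2 * y.1 ^ 2 + γ * y.1 * y.2 + 1 / 2 * y.2 ^ 2 + d * y.2 ^ 3
    + (c0 * y.1 ^ 4 + c3 * y.1 * y.2 ^ 3 + c4 * y.2 ^ 4)

section hHat

variable (γ d c0 c3 c4 : ℝ)

theorem pd1_hHat : pd1 (hHat γ d c0 c3 c4) = fun x =>
    γ ^ 2 * x.1 + γ * x.2 + 4 * c0 * x.1 ^ 3 + c3 * x.2 ^ 3 := by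
  ext x
  unfold hHat
  simp (disch := fun_prop) only [pd1, fderiv_fun_add, fderiv_fun_mul, fderiv_fun_pow,
    fderiv_fst, fderiv_snd, fderiv_fun_const, add_apply, smul_apply, smul_eq_mul,
    ContinuousLinearMap.coe_fst', ContinuousLinearMap.coe_snd', Pi.zero_apply, zero_apply]
  ring

theorem pd2_hHat : pd2 (hHat γ d c0 c3 c4) = fun x =>
    γ * x.1 + x.2 + 3 * d * x.2 ^ 2 + 3 * c3 * x.1 * x.2 ^ 2 + 4 * c4 * x.2 ^ 3 := by
  ext x
  unfold hHat
  simp (disch := fun_prop) only [pd2, fderiv_fun_add, fderiv_fun_mul, fderiv_fun_pow,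
    fderiv_fst, fderiv_snd, fderiv_fun_const, add_apply, smul_apply, smul_eq_mul,
    ContinuousLinearMap.coe_fst', ContinuousLinearMap.coe_snd', Pi.zero_apply, zero_apply]
  ring

theorem pd1_pd1_hHat : pd1 (pd1 (hHat γ d c0 c3 c4)) = fun x => γ ^ 2 + 12 * c0 * x.1 ^ 2 := by
  ext x
  rw [pd1_hHat]
  simp (disch := fun_prop) only [pd1, fderiv_fun_add, fderiv_fun_mul, fderiv_fun_pow,
    fderiv_fst, fderiv_snd, fderiv_fun_const, add_apply, smul_apply, smul_eq_mul,
    ContinuousLinearMap.coe_fst', ContinuousLinearMap.coe_snd', Pi.zero_apply, zero_apply]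
  ring

theorem pd1_pd2_hHat : pd1 (pd2 (hHat γ d c0 c3 c4)) = fun x => γ + 3 * c3 * x.2 ^ 2 := by
  ext x
  rw [pd2_hHat]
  simp (disch := fun_prop) only [pd1, fderiv_fun_add, fderiv_fun_mul, fderiv_fun_pow,
    fderiv_fst, fderiv_snd, fderiv_fun_const, add_apply, smul_apply, smul_eq_mul,
    ContinuousLinearMap.coe_fst', ContinuousLinearMap.coe_snd', Pi.zero_apply, zero_apply]
  ring

theorem pd2_pd2_hHat : pd2 (pd2 (hHat γ d c0 c3 c4)) = fun x =>
    1 + 6 * d * x.2 + 6 * c3 * x.1 * x.2 + 12 * c4 * x.2 ^ 2 := by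
  ext x
  rw [pd2_hHat]
  simp (disch := fun_prop) only [pd2, fderiv_fun_add, fderiv_fun_mul, fderiv_fun_pow,
    fderiv_fst, fderiv_snd, fderiv_fun_const, add_apply, smul_apply, smul_eq_mul,
    ContinuousLinearMap.coe_fst', ContinuousLinearMap.coe_snd', Pi.zero_apply, zero_apply]
  ring

theorem isJet2_mongeAmpereDefect_hHat {K : ℝ × ℝ → ℝ} {JK : Jet2} (hK : IsJet2 K JK) :
    IsJet2 (mongeAmpereDefect K (hHat γ d c0 c3 c4))
      (⟨γ ^ 2, 0, 0, 12 * c0, 0, 0⟩ * ⟨1, 0, 6 * d, 0, 6 * c3, 12 * c4⟩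
        - ⟨γ, 0, 0, 0, 0, 3 * c3⟩ * ⟨γ, 0, 0, 0, 0, 3 * c3⟩ - JK * Jet2.const (1 / 2)
        * (Jet2.const 1 + Jet2.const 2 * ⟨0, γ ^ 2, γ, 0, 0, 0⟩
          + (⟨0, γ ^ 2, γ, 0, 0, 0⟩ * ⟨0, γ ^ 2, γ, 0, 0, 0⟩
            + ⟨0, γ, 1, 0, 0, 3 * d⟩ * ⟨0, γ, 1, 0, 0, 3 * d⟩))) := by
  have cubic := isBigO_fst_pow_mul_snd_pow (𝓝 (0 : ℝ × ℝ))
  refine hK.mongeAmpereDefect ?_ ?_ ?_ ?_ ?_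
  · rw [pd1_hHat]
    exact isJet2_of_eq_add (r := fun x => 4 * c0 * (x.1 ^ 3 * x.2 ^ 0) + c3 * (x.1 ^ 0 * x.2 ^ 3))
      (fun x => by simp only [Jet2.eval, Jet2.lin, Jet2.quad]; ring)
      (((cubic 3 0).const_mul_left _).add ((cubic 0 3).const_mul_left _))
  · rw [pd2_hHat]
    exact isJet2_of_eq_add
      (r := fun x => 3 * c3 * (x.1 ^ 1 * x.2 ^ 2) + 4 * c4 * (x.1 ^ 0 * x.2 ^ 3))
      (fun x => by simp only [Jet2.eval, Jet2.lin, Jet2.quad]; ring)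
      (((cubic 1 2).const_mul_left _).add ((cubic 0 3).const_mul_left _))
  · rw [pd1_pd1_hHat]
    exact isJet2_of_eq_eval fun x => by simp only [Jet2.eval, Jet2.lin, Jet2.quad]; ring
  · rw [pd1_pd2_hHat]
    exact isJet2_of_eq_eval fun x => by simp only [Jet2.eval, Jet2.lin, Jet2.quad]; ring
  · rw [pd2_pd2_hHat]
    exact isJet2_of_eq_eval fun x => by simp only [Jet2.eval, Jet2.lin, Jet2.quad]; ring

end hHat

theorem stmt5_general (R γ : ℝ) (hγ : 0 < γ)
    (K : ℝ × ℝ → ℝ) (hK : ContDiff ℝ 3 K) (hK0 : K (0, 0) = 0)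
    (hK1 : pd1 K (0, 0) = 0) (hK2 : pd2 K (0, 0) = 2 * R) :
    ∃ d : ℝ, ∃ P4 : ℝ × ℝ → ℝ,
      (∃ c0 c1 c2 c3 c4 : ℝ, ∀ x : ℝ × ℝ,
        P4 x = c0 * x.1 ^ 4 + c1 * x.1 ^ 3 * x.2 + c2 * x.1 ^ 2 * x.2 ^ 2
          + c3 * x.1 * x.2 ^ 3 + c4 * x.2 ^ 4) ∧
      (∃ C > (0 : ℝ), ∃ r > (0 : ℝ), ∀ x : ℝ × ℝ, Real.sqrt (x.1 ^ 2 + x.2 ^ 2) ≤ r →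
        |detHess (fun y => (γ ^ 2 / 2) * y.1 ^ 2 + γ * y.1 * y.2 + (1 / 2) * y.2 ^ 2
              + d * y.2 ^ 3 + P4 y) x
            - K x / 2 *
              (1 + 2 * pd1 (fun y => (γ ^ 2 / 2) * y.1 ^ 2 + γ * y.1 * y.2
                    + (1 / 2) * y.2 ^ 2 + d * y.2 ^ 3 + P4 y) x
                + ((pd1 (fun y => (γ ^ 2 / 2) * y.1 ^ 2 + γ * y.1 * y.2
                      + (1 / 2) * y.2 ^ 2 + d * y.2 ^ 3 + P4 y) x) ^ 2
                  + (pd2 (fun y => (γ ^ 2 / 2) * y.1 ^ 2 + γ * y.1 * y.2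
                      + (1 / 2) * y.2 ^ 2 + d * y.2 ^ 3 + P4 y) x) ^ 2))|
          ≤ C * (x.1 ^ 2 + x.2 ^ 2) ^ ((3 : ℝ) / 2)) ∧
      d = R / (6 * γ ^ 2) := by
  rw [Prod.mk_zero_zero] at hK0 hK1 hK2
  set d := R / (6 * γ ^ 2)
  set c0 := pd1 (pd1 K) 0 / 48
  set c3 := (pd1 (pd2 K) 0 + pd2 (pd1 K) 0) / (24 * γ ^ 2) + R / 3
  set c4 := (pd2 (pd2 K) 0 / 2 + 4 * R * γ + 12 * γ * c3) / (24 * γ ^ 2)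
  have hjet : IsJet2 (mongeAmpereDefect K (hHat γ d c0 c3 c4)) 0 := by
    convert isJet2_mongeAmpereDefect_hHat γ d c0 c3 c4 hK.contDiffAt.isJet2_taylorJet2 using 1
    ext <;> simp [taylorJet2, hK0, hK1, hK2, d, c0, c3, c4] <;> field_simp <;> ring
  exact ⟨d, fun y => c0 * y.1 ^ 4 + c3 * y.1 * y.2 ^ 3 + c4 * y.2 ^ 4,
    ⟨c0, 0, 0, c3, c4, fun x => by ring⟩, hjet.exists_abs_le_rpow, rfl⟩

/-- Mixed-type case: if `K` is `C³`, vanishes at `0`, with `∂₁K(0) = 0` and `∂₂K(0) = 2R`,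
then for every `γ > 0` there exist `d` (one may take `d = R/(6γ²)`) and a homogeneous
quartic `P₄` such that `ĥ = (γ²/2)x₁² + γx₁x₂ + (1/2)x₂² + d x₂³ + P₄` solves the
Euclidean-model Bao–Ratiu Monge–Ampère equation up to an error `O(|x|³)`. -/
theorem stmt5 (R γ : ℝ) (hR : 0 < R) (hγ : 0 < γ)
    (K : ℝ × ℝ → ℝ) (hK : ContDiff ℝ 3 K) (hK0 : K (0, 0) = 0)
    (hK1 : pd1 K (0, 0) = 0) (hK2 : pd2 K (0, 0) = 2 * R) :
    ∃ d : ℝ, ∃ P4 : ℝ × ℝ → ℝ,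
      (∃ c0 c1 c2 c3 c4 : ℝ, ∀ x : ℝ × ℝ,
        P4 x = c0 * x.1 ^ 4 + c1 * x.1 ^ 3 * x.2 + c2 * x.1 ^ 2 * x.2 ^ 2
          + c3 * x.1 * x.2 ^ 3 + c4 * x.2 ^ 4) ∧
      (∃ C > (0 : ℝ), ∃ r > (0 : ℝ), ∀ x : ℝ × ℝ, Real.sqrt (x.1 ^ 2 + x.2 ^ 2) ≤ r →
        |detHess (fun y => (γ ^ 2 / 2) * y.1 ^ 2 + γ * y.1 * y.2 + (1 / 2) * y.2 ^ 2
              + d * y.2 ^ 3 + P4 y) x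
            - K x / 2 *
              (1 + 2 * pd1 (fun y => (γ ^ 2 / 2) * y.1 ^ 2 + γ * y.1 * y.2
                    + (1 / 2) * y.2 ^ 2 + d * y.2 ^ 3 + P4 y) x
                + ((pd1 (fun y => (γ ^ 2 / 2) * y.1 ^ 2 + γ * y.1 * y.2
                      + (1 / 2) * y.2 ^ 2 + d * y.2 ^ 3 + P4 y) x) ^ 2
                  + (pd2 (fun y => (γ ^ 2 / 2) * y.1 ^ 2 + γ * y.1 * y.2
                      + (1 / 2) * y.2 ^ 2 + d * y.2 ^ 3 + P4 y) x) ^ 2))|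
          ≤ C * (x.1 ^ 2 + x.2 ^ 2) ^ ((3 : ℝ) / 2)) ∧
      d = R / (6 * γ ^ 2) :=
  stmt5_general R γ hγ K hK hK0 hK1 hK2
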